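/- arXiv:2507.05083 — 2 statements merged into one kernel-verified Lean document; each statement's English description precedes it below -/
import Mathlib

section
/- Let x_0 < x_1 < x_2 < x_3 with consecutive gaps at most h, and let ω(x) = (x-x_0)(x-x_1)(x-x_2)(x-x_3). Then 0 < |ω''(x_0)| ≤ 22·h². -/
/-- Bound on the second derivative at `x₀` of the node polynomial
`ω(x) = (x-x₀)(x-x₁)(x-x₂)(x-x₃)`: one has `0 < |ω''(x₀)| ≤ 22 h²`. -/
theorem node_poly_second_deriv_bound (h x0 x1 x2 x3 : ℝ) (hh : 0 < h)
    (h01 : x0 < x1) (h12 : x1 < x2) (h23 : x2 < x3)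
    (g1 : x1 - x0 ≤ h) (g2 : x2 - x1 ≤ h) (g3 : x3 - x2 ≤ h) :
    0 < |iteratedDeriv 2 (fun x : ℝ => (x - x0) * (x - x1) * (x - x2) * (x - x3)) x0| ∧
      |iteratedDeriv 2 (fun x : ℝ => (x - x0) * (x - x1) * (x - x2) * (x - x3)) x0|
        ≤ 22 * h ^ 2 := by
  have key : iteratedDeriv 2 (fun x : ℝ => (x - x0) * (x - x1) * (x - x2) * (x - x3)) x0
      = 2*((x0-x1)*(x0-x2)+(x0-x1)*(x0-x3)+(x0-x2)*(x0-x3)) := by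
    have hp : (fun x : ℝ => (x - x0) * (x - x1) * (x - x2) * (x - x3)) =
        fun x => Polynomial.eval x
          ((Polynomial.X - Polynomial.C x0) * (Polynomial.X - Polynomial.C x1) *
           (Polynomial.X - Polynomial.C x2) * (Polynomial.X - Polynomial.C x3)) := by
      funext x; simp
    rw [hp, iteratedDeriv_succ, iteratedDeriv_one]
    have h1 : deriv (fun x : ℝ => Polynomial.eval x
          ((Polynomial.X - Polynomial.C x0) * (Polynomial.X - Polynomial.C x1) *
           (Polynomial.X - Polynomial.C x2) * (Polynomial.X - Polynomial.C x3))) =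
        fun x => Polynomial.eval x (Polynomial.derivative
          ((Polynomial.X - Polynomial.C x0) * (Polynomial.X - Polynomial.C x1) *
           (Polynomial.X - Polynomial.C x2) * (Polynomial.X - Polynomial.C x3))) := by
      funext x; exact Polynomial.deriv _
    rw [h1, Polynomial.deriv]
    simp [Polynomial.derivative_mul]
    ring
  rw [key]
  have hpos : 0 < 2*((x0-x1)*(x0-x2)+(x0-x1)*(x0-x3)+(x0-x2)*(x0-x3)) := by
    nlinarith
  rw [abs_of_pos hpos]
  refine ⟨hpos, ?_⟩
  nlinarith [sq_nonneg (x1 - x0), sq_nonneg (x2 - x1), sq_nonneg (x3 - x2),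
    mul_pos (sub_pos.2 h01) (sub_pos.2 h12)]
end

section
/- Let g be twice continuously differentiable on [a,b] and suppose the restriction of g'' to [a,b] is affine (linear) with g''(a) = 0, while δ > 0 satisfies 0.8·δ ≤ f''(x) ≤ 1.2·δ on [a,b] for some C² function f. Then either g''(x) − f''(x) < −0.2·δ for all x in [a, a+(b−a)/4], or g''(x) − f''(x) > 0.2·δ for all x in [b−(b−a)/4, b]. -/
/-- Dichotomy for a linear second derivative vanishing at `a` against a
function whose second derivative lies in the band `[0.8δ, 1.2δ]`. -/
theorem natural_spline_dichotomy (a b δ m : ℝ) (f g : ℝ → ℝ)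
    (hab : a < b) (hδ : 0 < δ)
    (hf : ContDiff ℝ 2 f)
    (hg : ContDiff ℝ 2 g)
    (hAff : ∀ x ∈ Set.Icc a b, iteratedDeriv 2 g x = m * (x - a))
    (hband : ∀ x ∈ Set.Icc a b,
      0.8 * δ ≤ iteratedDeriv 2 f x ∧ iteratedDeriv 2 f x ≤ 1.2 * δ) :
    (∀ x ∈ Set.Icc a (a + (b - a) / 4),
        iteratedDeriv 2 g x - iteratedDeriv 2 f x < -(0.2 * δ)) ∨
    (∀ x ∈ Set.Icc (b - (b - a) / 4) b,
        iteratedDeriv 2 g x - iteratedDeriv 2 f x > 0.2 * δ) := by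
  have hb : (0:ℝ) < b - a := by linarith
  rcases lt_or_ge m (2.4 * δ / (b - a)) with hm | hm
  · left; intro x hx
    have hxab : x ∈ Set.Icc a b := ⟨hx.1, by nlinarith [hx.2]⟩
    rw [hAff x hxab]
    have h2 := (hband x hxab).1
    have hxa : (0:ℝ) ≤ x - a := by linarith [hx.1]
    have hkey : m * (x - a) < 0.6 * δ := by
      rcases eq_or_lt_of_le hxa with h | h
      · rw [← h]; nlinarith
      · have h3 : m * (x - a) < (2.4 * δ / (b - a)) * (x - a) := by nlinarith
        have h4 : (2.4 * δ / (b - a)) * (x - a) ≤ 0.6 * δ := by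
          rw [div_mul_eq_mul_div, div_le_iff₀ hb]; nlinarith [hx.2]
        linarith
    linarith
  · right; intro x hx
    have hxab : x ∈ Set.Icc a b := ⟨by nlinarith [hx.1], hx.2⟩
    rw [hAff x hxab]
    have h2 := (hband x hxab).2
    have hm' : 2.4 * δ ≤ m * (b - a) := by
      rw [div_le_iff₀ hb] at hm; linarith
    have hx3 : 3 * (b - a) / 4 ≤ x - a := by linarith [hx.1]
    have hm0 : 0 < m := by nlinarith
    have : 1.8 * δ ≤ m * (x - a) := by nlinarith
    linarith
end
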